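/- arXiv:2412.19805 — 3 statements merged into one kernel-verified Lean document; each statement's English description precedes it below -/
import Mathlib

section
/- For all processes P and Q and every X ⊆ A: P is concrete branching X-bisimilar to Q if and only if θ_X(P) is concrete branching reactive bisimilar to θ_X(Q), where θ_X is the environment operator that restricts visible actions to X unless the argument is deadlocked under X. -/
inductive Act (A : Type) where
  | vis (a : A)
  | tau
  | to

def TauPath {S A : Type} (Tr : S → Act A → S → Prop) : S → S → Prop :=
  Relation.ReflTransGen (fun p q => Tr p Act.tau q)

def OptStep {S A : Type} (Tr : S → Act A → S → Prop) (α : Act A) (p q : S) : Prop :=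
  (α = Act.tau ∧ p = q) ∨ Tr p α q

def Stable {S A : Type} (Tr : S → Act A → S → Prop) (p : S) : Prop :=
  ¬ ∃ p', Tr p Act.tau p'

def Idle {S A : Type} (Tr : S → Act A → S → Prop) (p : S) (X : Set A) : Prop :=
  Stable Tr p ∧ ∀ a ∈ X, ¬ ∃ p', Tr p (Act.vis a) p'

def InitSet {S A : Type} (Tr : S → Act A → S → Prop) (p : S) : Set (Act A) :=
  {α | α ≠ Act.to ∧ ∃ p', Tr p α p'}

structure CBRB {S A : Type} (Tr : S → Act A → S → Prop)
    (Rp : S → S → Prop) (Rt : S → Set A → S → Prop) : Prop where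
  symm_p : ∀ {P Q}, Rp P Q → Rp Q P
  symm_t : ∀ {P X Q}, Rt P X Q → Rt Q X P
  c1a : ∀ {P Q α P'}, Rp P Q → α ≠ Act.to → Tr P α P' →
    ∃ Q1 Q2, TauPath Tr Q Q1 ∧ OptStep Tr α Q1 Q2 ∧ Rp P Q1 ∧ Rp P' Q2
  c1b : ∀ {P Q} (Y : Set A), Rp P Q → Rt P Y Q
  c2a : ∀ {P X Q P'}, Rt P X Q → Tr P Act.tau P' →
    ∃ Q1 Q2, TauPath Tr Q Q1 ∧ OptStep Tr Act.tau Q1 Q2 ∧ Rt P X Q1 ∧ Rt P' X Q2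
  c2b : ∀ {P X Q a P'}, Rt P X Q → a ∈ X → Tr P (Act.vis a) P' →
    ∃ Q1 Q2, TauPath Tr Q Q1 ∧ Tr Q1 (Act.vis a) Q2 ∧ Rt P X Q1 ∧ Rp P' Q2
  c2c : ∀ {P X Q}, Rt P X Q → Idle Tr P X → ∃ Q0, TauPath Tr Q Q0 ∧ Rp P Q0
  c2d : ∀ {P X Q P'}, Rt P X Q → Idle Tr P X → Tr P Act.to P' →
    ∃ Q1 Q2, TauPath Tr Q Q1 ∧ Tr Q1 Act.to Q2 ∧ Rt P' X Q2
  c2e : ∀ {P X Q}, Rt P X Q → Stable Tr P → ∃ Q0, TauPath Tr Q Q0 ∧ Stable Tr Q0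

def Bis {S A : Type} (Tr : S → Act A → S → Prop) (P Q : S) : Prop :=
  ∃ Rp Rt, CBRB Tr Rp Rt ∧ Rp P Q

def BisX {S A : Type} (Tr : S → Act A → S → Prop) (P : S) (X : Set A) (Q : S) : Prop :=
  ∃ Rp Rt, CBRB Tr Rp Rt ∧ Rt P X Q

/-- Semantics of the environment operator `θ_X`:
`θ_X(P) -tau-> θ_X(P')` iff `P -tau-> P'`; `θ_X(P) -a-> P'` iff `P -a-> P'` and `a ∈ X`;
`θ_X(P) -α-> P'` iff `P -α-> P'` and `I(P) ∩ (X ∪ {tau}) = ∅`. -/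
def ThetaSem {C A : Type} (Tr : C → Act A → C → Prop) (theta : Set A → C → C) : Prop :=
  ∀ (X : Set A) (P : C) (α : Act A) (Q' : C),
    Tr (theta X P) α Q' ↔
      ((α = Act.tau ∧ ∃ P', Tr P Act.tau P' ∧ Q' = theta X P') ∨
       (∃ a, α = Act.vis a ∧ a ∈ X ∧ Tr P α Q') ∨
       (Idle Tr P X ∧ Tr P α Q'))

/-!
Both directions are proved by exhibiting a bisimulation, each time "up to union" with the one
we are given.

(⇒) From an `X`-bisimulation `R`, relate `θ_X P` and `θ_X Q` whenever `R` relates `P` and `Q`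
under `X`. The operator `θ_X` lets a visible action outside `X`, or a time-out, through only when
its argument is `X`-idle; then clause (2c) lets `Q` silently reach some `Q₀ ~ P`, and as `P` is
stable, `Q₀` silently reaches an `X`-idle `Q₁ ~ P`, which answers the step under `θ_X`.

(⇐) From a bisimulation relating `θ_X P` and `θ_X Q`, take as time-out part all `(M, Y, N)` with
`θ_Y M` and `θ_Y N` related. Clause (2c) then produces pairs of `Y`-idle processes with related
`θ_Y`-images, which we add to the untimed part: on a `Z`-idle argument `θ_Z` is transparent, so
bisimilarity of the images transfers back.
-/

section Basic

variable {S A : Type} {Tr : S → Act A → S → Prop} {p q : S}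

theorem Stable.eq_of_tauPath (hs : Stable Tr p) (h : TauPath Tr p q) : q = p := by
  rcases h.cases_head with h | ⟨r, hr, -⟩
  · exact h.symm
  · exact absurd ⟨r, hr⟩ hs

theorem Stable.eq_of_optStep (hs : Stable Tr p) (h : OptStep Tr Act.tau p q) : q = p := by
  rcases h with ⟨-, rfl⟩ | h
  · rfl
  · exact absurd ⟨q, h⟩ hs

theorem Idle.anti {X Y : Set A} (h : Idle Tr p Y) (hXY : X ⊆ Y) : Idle Tr p X :=
  ⟨h.1, fun a ha => h.2 a (hXY ha)⟩

theorem Idle.union {X Y : Set A} (hX : Idle Tr p X) (hY : Idle Tr p Y) : Idle Tr p (X ∪ Y) :=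
  ⟨hX.1, fun a ha => ha.elim (hX.2 a) (hY.2 a)⟩

end Basic

/-- Progression, as in up-to techniques: the clauses of `CBRB` for the pairs in `(Sp, St)`, with
the answers taken in `(Rp, Rt)`. -/
structure Progresses {S A : Type} (Tr : S → Act A → S → Prop)
    (Sp : S → S → Prop) (St : S → Set A → S → Prop)
    (Rp : S → S → Prop) (Rt : S → Set A → S → Prop) : Prop where
  symm_p : ∀ {P Q}, Sp P Q → Sp Q P
  symm_t : ∀ {P X Q}, St P X Q → St Q X P
  c1a : ∀ {P Q α P'}, Sp P Q → α ≠ Act.to → Tr P α P' →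
    ∃ Q1 Q2, TauPath Tr Q Q1 ∧ OptStep Tr α Q1 Q2 ∧ Rp P Q1 ∧ Rp P' Q2
  c1b : ∀ {P Q} (Y : Set A), Sp P Q → Rt P Y Q
  c2a : ∀ {P X Q P'}, St P X Q → Tr P Act.tau P' →
    ∃ Q1 Q2, TauPath Tr Q Q1 ∧ OptStep Tr Act.tau Q1 Q2 ∧ Rt P X Q1 ∧ Rt P' X Q2
  c2b : ∀ {P X Q a P'}, St P X Q → a ∈ X → Tr P (Act.vis a) P' →
    ∃ Q1 Q2, TauPath Tr Q Q1 ∧ Tr Q1 (Act.vis a) Q2 ∧ Rt P X Q1 ∧ Rp P' Q2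
  c2c : ∀ {P X Q}, St P X Q → Idle Tr P X → ∃ Q0, TauPath Tr Q Q0 ∧ Rp P Q0
  c2d : ∀ {P X Q P'}, St P X Q → Idle Tr P X → Tr P Act.to P' →
    ∃ Q1 Q2, TauPath Tr Q Q1 ∧ Tr Q1 Act.to Q2 ∧ Rt P' X Q2
  c2e : ∀ {P X Q}, St P X Q → Stable Tr P → ∃ Q0, TauPath Tr Q Q0 ∧ Stable Tr Q0

namespace Progresses

variable {S A : Type} {Tr : S → Act A → S → Prop} {Sp Sp' Rp Rp' : S → S → Prop}
  {St St' Rt Rt' : S → Set A → S → Prop}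

theorem mono (h : Progresses Tr Sp St Rp Rt) (hp : Rp ≤ Rp') (ht : Rt ≤ Rt') :
    Progresses Tr Sp St Rp' Rt' where
  symm_p := h.symm_p
  symm_t := h.symm_t
  c1a hPQ hα hstep :=
    let ⟨Q1, Q2, hp1, ho, h1, h2⟩ := h.c1a hPQ hα hstep
    ⟨Q1, Q2, hp1, ho, hp _ _ h1, hp _ _ h2⟩
  c1b Y hPQ := ht _ _ _ (h.c1b Y hPQ)
  c2a hPQ hstep :=
    let ⟨Q1, Q2, hp1, ho, h1, h2⟩ := h.c2a hPQ hstep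
    ⟨Q1, Q2, hp1, ho, ht _ _ _ h1, ht _ _ _ h2⟩
  c2b hPQ ha hstep :=
    let ⟨Q1, Q2, hp1, hQ1, h1, h2⟩ := h.c2b hPQ ha hstep
    ⟨Q1, Q2, hp1, hQ1, ht _ _ _ h1, hp _ _ h2⟩
  c2c hPQ hi :=
    let ⟨Q0, hp0, h0⟩ := h.c2c hPQ hi
    ⟨Q0, hp0, hp _ _ h0⟩
  c2d hPQ hi hstep :=
    let ⟨Q1, Q2, hp1, hQ1, h2⟩ := h.c2d hPQ hi hstep
    ⟨Q1, Q2, hp1, hQ1, ht _ _ _ h2⟩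
  c2e := h.c2e

theorem sup (h : Progresses Tr Sp St Rp Rt) (h' : Progresses Tr Sp' St' Rp Rt) :
    Progresses Tr (Sp ⊔ Sp') (St ⊔ St') Rp Rt where
  symm_p hPQ := Or.imp h.symm_p h'.symm_p hPQ
  symm_t hPQ := Or.imp h.symm_t h'.symm_t hPQ
  c1a hPQ := Or.elim hPQ h.c1a h'.c1a
  c1b Y hPQ := Or.elim hPQ (h.c1b Y) (h'.c1b Y)
  c2a hPQ := Or.elim hPQ h.c2a h'.c2a
  c2b hPQ := Or.elim hPQ h.c2b h'.c2b
  c2c hPQ := Or.elim hPQ h.c2c h'.c2c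
  c2d hPQ := Or.elim hPQ h.c2d h'.c2d
  c2e hPQ := Or.elim hPQ h.c2e h'.c2e

theorem cbrb (h : Progresses Tr Rp Rt Rp Rt) : CBRB Tr Rp Rt :=
  ⟨h.symm_p, h.symm_t, h.c1a, h.c1b, h.c2a, h.c2b, h.c2c, h.c2d, h.c2e⟩

end Progresses

namespace CBRB

variable {S A : Type} {Tr : S → Act A → S → Prop} {Rp Sp : S → S → Prop}
  {Rt St : S → Set A → S → Prop} (hB : CBRB Tr Rp Rt)
include hB

theorem progresses : Progresses Tr Rp Rt Rp Rt :=
  ⟨hB.symm_p, hB.symm_t, hB.c1a, hB.c1b, hB.c2a, hB.c2b, hB.c2c, hB.c2d, hB.c2e⟩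

/-- Bisimulation up to union with a bisimulation. -/
theorem sup (h : Progresses Tr Sp St (Rp ⊔ Sp) (Rt ⊔ St)) : CBRB Tr (Rp ⊔ Sp) (Rt ⊔ St) :=
  ((hB.progresses.mono le_sup_left le_sup_left).sup h).cbrb

theorem rp_of_tauPath {P Q Q'} (hs : Stable Tr P) (h : Rp P Q) (hp : TauPath Tr Q Q') :
    Rp P Q' := by
  induction hp with
  | refl => exact h
  | tail _ hstep ih =>
    obtain ⟨P1, P2, hp1, ho, -, h2⟩ := hB.c1a (hB.symm_p ih) (by simp) hstep
    rw [hs.eq_of_tauPath hp1] at ho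
    rw [hs.eq_of_optStep ho] at h2
    exact hB.symm_p h2

theorem rt_of_tauPath {P X Q Q'} (hs : Stable Tr P) (h : Rt P X Q) (hp : TauPath Tr Q Q') :
    Rt P X Q' := by
  induction hp with
  | refl => exact h
  | tail _ hstep ih =>
    obtain ⟨P1, P2, hp1, ho, -, h2⟩ := hB.c2a (hB.symm_t ih) hstep
    rw [hs.eq_of_tauPath hp1] at ho
    rw [hs.eq_of_optStep ho] at h2
    exact hB.symm_t h2

theorem not_tr_vis {P Q a} (hs : Stable Tr P) (hP : ¬ ∃ P', Tr P (Act.vis a) P')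
    (h : Rp P Q) : ¬ ∃ Q', Tr Q (Act.vis a) Q' := by
  rintro ⟨Q', hQ⟩
  obtain ⟨P1, P2, hp, ho, -, -⟩ := hB.c1a (hB.symm_p h) (by simp) hQ
  rw [hs.eq_of_tauPath hp] at ho
  rcases ho with ⟨he, -⟩ | ho
  · nomatch he
  · exact hP ⟨P2, ho⟩

theorem exists_idle {P Q} {Y : Set A} (hi : Idle Tr P Y) (h : Rp P Q) :
    ∃ Q', TauPath Tr Q Q' ∧ Idle Tr Q' Y ∧ Rp P Q' := by
  obtain ⟨Q', hp, hs⟩ := hB.c2e (hB.c1b ∅ h) hi.1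
  have h' := hB.rp_of_tauPath hi.1 h hp
  exact ⟨Q', hp, ⟨hs, fun a ha => hB.not_tr_vis hi.1 (hi.2 a ha) h'⟩, h'⟩

end CBRB

namespace ThetaSem

variable {S A : Type} {Tr : S → Act A → S → Prop} {theta : Set A → S → S}
  (htheta : ThetaSem Tr theta) {X Y : Set A} {p q r : S} {a : A}
include htheta

theorem tr_tau (h : Tr p Act.tau q) : Tr (theta X p) Act.tau (theta X q) :=
  (htheta X p _ _).2 (Or.inl ⟨rfl, q, h, rfl⟩)

theorem tr_vis (ha : a ∈ X) (h : Tr p (Act.vis a) q) : Tr (theta X p) (Act.vis a) q :=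
  (htheta X p _ _).2 (Or.inr (Or.inl ⟨a, rfl, ha, h⟩))

theorem tr_of_idle {α} (hi : Idle Tr p X) (h : Tr p α q) : Tr (theta X p) α q :=
  (htheta X p _ _).2 (Or.inr (Or.inr ⟨hi, h⟩))

theorem exists_of_tr_tau (h : Tr (theta X p) Act.tau r) :
    ∃ q, Tr p Act.tau q ∧ r = theta X q := by
  rcases (htheta X p _ _).1 h with ⟨-, hq⟩ | ⟨_, he, -⟩ | ⟨hi, h⟩
  · exact hq
  · nomatch he
  · exact absurd ⟨r, h⟩ hi.1

theorem of_tr_vis (h : Tr (theta X p) (Act.vis a) q) :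
    Tr p (Act.vis a) q ∧ (a ∈ X ∨ Idle Tr p X) := by
  rcases (htheta X p _ _).1 h with ⟨he, -⟩ | ⟨b, he, hb, h⟩ | ⟨hi, h⟩
  · nomatch he
  · cases he
    exact ⟨h, Or.inl hb⟩
  · exact ⟨h, Or.inr hi⟩

theorem of_tr_to (h : Tr (theta X p) Act.to q) : Idle Tr p X ∧ Tr p Act.to q := by
  rcases (htheta X p _ _).1 h with ⟨he, -⟩ | ⟨_, he, -⟩ | h
  · nomatch he
  · nomatch he
  · exact h

theorem stable_iff : Stable Tr (theta X p) ↔ Stable Tr p := by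
  refine not_congr ⟨fun ⟨_, h⟩ => ?_, fun ⟨q, h⟩ => ⟨_, htheta.tr_tau h⟩⟩
  obtain ⟨q, hq, -⟩ := htheta.exists_of_tr_tau h
  exact ⟨q, hq⟩

theorem tauPath (h : TauPath Tr p q) : TauPath Tr (theta X p) (theta X q) := by
  induction h with
  | refl => exact .refl
  | tail _ hstep ih => exact ih.tail (htheta.tr_tau hstep)

theorem exists_of_tauPath (h : TauPath Tr (theta X p) r) :
    ∃ q, TauPath Tr p q ∧ r = theta X q := by
  induction h with
  | refl => exact ⟨p, .refl, rfl⟩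
  | tail _ hstep ih =>
    obtain ⟨q, hq, rfl⟩ := ih
    obtain ⟨q', hq', rfl⟩ := htheta.exists_of_tr_tau hstep
    exact ⟨q', hq.tail hq', rfl⟩

theorem optStep (h : OptStep Tr Act.tau p q) : OptStep Tr Act.tau (theta X p) (theta X q) :=
  h.imp (fun ⟨he, hpq⟩ => ⟨he, hpq ▸ rfl⟩) htheta.tr_tau

theorem exists_of_optStep (h : OptStep Tr Act.tau (theta X p) r) :
    ∃ q, OptStep Tr Act.tau p q ∧ r = theta X q := by
  rcases h with ⟨-, rfl⟩ | h
  · exact ⟨p, Or.inl ⟨rfl, rfl⟩, rfl⟩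
  · obtain ⟨q, hq, rfl⟩ := htheta.exists_of_tr_tau h
    exact ⟨q, Or.inr hq, rfl⟩

theorem idle_theta (hi : Idle Tr p Y) : Idle Tr (theta X p) Y :=
  ⟨htheta.stable_iff.2 hi.1, fun a ha ⟨q, h⟩ => hi.2 a ha ⟨q, (htheta.of_tr_vis h).1⟩⟩

theorem idle_of_idle_theta (hX : Idle Tr p X) (hY : Idle Tr (theta X p) Y) : Idle Tr p Y :=
  ⟨hX.1, fun a ha ⟨q, h⟩ => hY.2 a ha ⟨q, htheta.tr_of_idle hX h⟩⟩

theorem idle_of_idle_theta_self (hi : Idle Tr (theta X p) X) : Idle Tr p X :=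
  ⟨htheta.stable_iff.1 hi.1, fun a ha ⟨q, h⟩ => hi.2 a ha ⟨q, htheta.tr_vis ha h⟩⟩

end ThetaSem

def thetaImage {S A : Type} (theta : Set A → S → S) (Rt : S → Set A → S → Prop) (M N : S) :
    Prop :=
  ∃ P Q X, M = theta X P ∧ N = theta X Q ∧ Rt P X Q

namespace ThetaSem

variable {S A : Type} {Tr : S → Act A → S → Prop} {theta : Set A → S → S}
  {Rp : S → S → Prop} {Rt : S → Set A → S → Prop}
  (htheta : ThetaSem Tr theta) (hB : CBRB Tr Rp Rt) {P Q M' : S} {X : Set A}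
include htheta hB

theorem exists_match_tau (h : Rt P X Q) (hstep : Tr (theta X P) Act.tau M') :
    ∃ Q1 Q2, TauPath Tr (theta X Q) Q1 ∧ OptStep Tr Act.tau Q1 Q2 ∧
      thetaImage theta Rt (theta X P) Q1 ∧ thetaImage theta Rt M' Q2 := by
  obtain ⟨P', hP', rfl⟩ := htheta.exists_of_tr_tau hstep
  obtain ⟨Q1, Q2, hp, ho, h1, h2⟩ := hB.c2a h hP'
  exact ⟨_, _, htheta.tauPath hp, htheta.optStep ho, ⟨P, Q1, X, rfl, rfl, h1⟩,
    ⟨P', Q2, X, rfl, rfl, h2⟩⟩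

theorem exists_match_vis {a} (h : Rt P X Q) (hstep : Tr (theta X P) (Act.vis a) M') :
    ∃ Q1 Q2, TauPath Tr (theta X Q) Q1 ∧ Tr Q1 (Act.vis a) Q2 ∧
      thetaImage theta Rt (theta X P) Q1 ∧ Rp M' Q2 := by
  obtain ⟨hP', ha | hi⟩ := htheta.of_tr_vis hstep
  · obtain ⟨Q1, Q2, hp, hQ1, h1, h2⟩ := hB.c2b h ha hP'
    exact ⟨_, Q2, htheta.tauPath hp, htheta.tr_vis ha hQ1, ⟨P, Q1, X, rfl, rfl, h1⟩, h2⟩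
  · -- `θ_X` passes the step only because `P` is `X`-idle, so `Q` must first become `X`-idle
    obtain ⟨Q0, hp0, h0⟩ := hB.c2c h hi
    obtain ⟨Q1, hp1, hi1, h1⟩ := hB.exists_idle hi h0
    obtain ⟨Q1', Q2, hp2, ho, -, h2⟩ := hB.c1a h1 (by simp) hP'
    rw [hi1.1.eq_of_tauPath hp2] at ho
    rcases ho with ⟨he, -⟩ | hQ1
    · nomatch he
    · exact ⟨_, Q2, htheta.tauPath (hp0.trans hp1), htheta.tr_of_idle hi1 hQ1,
        ⟨P, Q1, X, rfl, rfl, hB.c1b X h1⟩, h2⟩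

theorem exists_match_to {Y : Set A} (h : Rt P X Q) (hiY : Idle Tr (theta X P) Y)
    (hstep : Tr (theta X P) Act.to M') :
    ∃ Q1 Q2, TauPath Tr (theta X Q) Q1 ∧ Tr Q1 Act.to Q2 ∧ Rt M' Y Q2 := by
  obtain ⟨hiX, hP'⟩ := htheta.of_tr_to hstep
  replace hiY := htheta.idle_of_idle_theta hiX hiY
  obtain ⟨Q0, hp0, h0⟩ := hB.c2c h hiX
  obtain ⟨Q1, hp1, hi1, h1⟩ := hB.exists_idle (hiX.union hiY) h0
  obtain ⟨Q1', Q2, hp2, hQ1, h2⟩ := hB.c2d (hB.c1b Y h1) hiY hP'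
  rw [hi1.1.eq_of_tauPath hp2] at hQ1
  exact ⟨_, Q2, htheta.tauPath (hp0.trans hp1),
    htheta.tr_of_idle (hi1.anti Set.subset_union_left) hQ1, h2⟩

theorem exists_tauPath_stable (h : Rt P X Q) (hs : Stable Tr (theta X P)) :
    ∃ Q0, TauPath Tr (theta X Q) Q0 ∧ Stable Tr Q0 ∧ thetaImage theta Rt (theta X P) Q0 := by
  rw [htheta.stable_iff] at hs
  obtain ⟨Q0, hp, hQ0⟩ := hB.c2e h hs
  exact ⟨_, htheta.tauPath hp, htheta.stable_iff.2 hQ0,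
    ⟨P, Q0, X, rfl, rfl, hB.rt_of_tauPath hs h hp⟩⟩

theorem progresses_thetaImage :
    Progresses Tr (thetaImage theta Rt) (fun M _ N => thetaImage theta Rt M N)
      (Rp ⊔ thetaImage theta Rt) (Rt ⊔ fun M _ N => thetaImage theta Rt M N) where
  symm_p := fun ⟨P, Q, X, hP, hQ, h⟩ => ⟨Q, P, X, hQ, hP, hB.symm_t h⟩
  symm_t := fun ⟨P, Q, X, hP, hQ, h⟩ => ⟨Q, P, X, hQ, hP, hB.symm_t h⟩
  c1a := by
    rintro _ _ α M' ⟨P, Q, X, rfl, rfl, h⟩ hα hstep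
    match α with
    | Act.tau =>
      obtain ⟨Q1, Q2, hp, ho, h1, h2⟩ := htheta.exists_match_tau hB h hstep
      exact ⟨Q1, Q2, hp, ho, Or.inr h1, Or.inr h2⟩
    | Act.vis a =>
      obtain ⟨Q1, Q2, hp, hQ1, h1, h2⟩ := htheta.exists_match_vis hB h hstep
      exact ⟨Q1, Q2, hp, Or.inr hQ1, Or.inr h1, Or.inl h2⟩
    | Act.to => exact absurd rfl hα
  c1b _ h := Or.inr h
  c2a := by
    rintro _ _ _ M' ⟨P, Q, X, rfl, rfl, h⟩ hstep
    obtain ⟨Q1, Q2, hp, ho, h1, h2⟩ := htheta.exists_match_tau hB h hstep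
    exact ⟨Q1, Q2, hp, ho, Or.inr h1, Or.inr h2⟩
  c2b := by
    rintro _ _ _ a M' ⟨P, Q, X, rfl, rfl, h⟩ - hstep
    obtain ⟨Q1, Q2, hp, hQ1, h1, h2⟩ := htheta.exists_match_vis hB h hstep
    exact ⟨Q1, Q2, hp, hQ1, Or.inr h1, Or.inl h2⟩
  c2c := by
    rintro _ _ _ ⟨P, Q, X, rfl, rfl, h⟩ hi
    obtain ⟨Q0, hp, -, h0⟩ := htheta.exists_tauPath_stable hB h hi.1
    exact ⟨Q0, hp, Or.inr h0⟩
  c2d := by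
    rintro _ _ _ M' ⟨P, Q, X, rfl, rfl, h⟩ hi hstep
    obtain ⟨Q1, Q2, hp, hQ1, h2⟩ := htheta.exists_match_to hB h hi hstep
    exact ⟨Q1, Q2, hp, hQ1, Or.inl h2⟩
  c2e := by
    rintro _ _ _ ⟨P, Q, X, rfl, rfl, h⟩ hs
    obtain ⟨Q0, hp, hQ0, -⟩ := htheta.exists_tauPath_stable hB h hs
    exact ⟨Q0, hp, hQ0⟩

end ThetaSem

def thetaPreimage {S A : Type} (theta : Set A → S → S) (Rp : S → S → Prop) (M : S) (Y : Set A)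
    (N : S) : Prop :=
  Rp (theta Y M) (theta Y N)

def idlePairs {S A : Type} (Tr : S → Act A → S → Prop) (theta : Set A → S → S)
    (Rp : S → S → Prop) (M N : S) : Prop :=
  ∃ Z, Idle Tr M Z ∧ Idle Tr N Z ∧ Rp (theta Z M) (theta Z N)

namespace ThetaSem

variable {S A : Type} {Tr : S → Act A → S → Prop} {theta : Set A → S → S}
  {Rp : S → S → Prop} {Rt : S → Set A → S → Prop}
  (htheta : ThetaSem Tr theta) (hB : CBRB Tr Rp Rt) {M N M' : S} {Y Z : Set A}
include htheta hB

theorem exists_match_tau_of_theta (h : Rp (theta Y M) (theta Y N)) (hstep : Tr M Act.tau M') :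
    ∃ N1 N2, TauPath Tr N N1 ∧ OptStep Tr Act.tau N1 N2 ∧
      Rp (theta Y M) (theta Y N1) ∧ Rp (theta Y M') (theta Y N2) := by
  obtain ⟨N1, N2, hp, ho, h1, h2⟩ := hB.c1a h (by simp) (htheta.tr_tau hstep)
  obtain ⟨n1, hpn, rfl⟩ := htheta.exists_of_tauPath hp
  obtain ⟨n2, hon, rfl⟩ := htheta.exists_of_optStep ho
  exact ⟨n1, n2, hpn, hon, h1, h2⟩

theorem exists_match_vis_of_theta {a} (h : Rp (theta Y M) (theta Y N))
    (hstep : Tr (theta Y M) (Act.vis a) M') :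
    ∃ N1 N2, TauPath Tr N N1 ∧ Tr N1 (Act.vis a) N2 ∧
      Rp (theta Y M) (theta Y N1) ∧ Rp M' N2 := by
  obtain ⟨N1, N2, hp, ho, h1, h2⟩ := hB.c1a h (by simp) hstep
  obtain ⟨n1, hpn, rfl⟩ := htheta.exists_of_tauPath hp
  rcases ho with ⟨he, -⟩ | ho
  · nomatch he
  · exact ⟨n1, N2, hpn, (htheta.of_tr_vis ho).1, h1, h2⟩

theorem exists_match_vis_of_idle {a} (h : Rp (theta Z M) (theta Z N)) (hiM : Idle Tr M Z)
    (hiN : Idle Tr N Z) (hstep : Tr M (Act.vis a) M') :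
    ∃ N2, Tr N (Act.vis a) N2 ∧ Rp M' N2 := by
  obtain ⟨N1, N2, hp, hN1, -, h2⟩ :=
    htheta.exists_match_vis_of_theta hB h (htheta.tr_of_idle hiM hstep)
  rw [hiN.1.eq_of_tauPath hp] at hN1
  exact ⟨N2, hN1, h2⟩

theorem exists_match_to_of_theta (h : Rp (theta Z M) (theta Z N)) (hiY : Idle Tr M Y)
    (hiZ : Idle Tr M Z) (hstep : Tr M Act.to M') :
    ∃ N1 N2, TauPath Tr N N1 ∧ Tr N1 Act.to N2 ∧ Rt M' Y N2 := by
  obtain ⟨N1, N2, hp, hN1, h2⟩ :=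
    hB.c2d (hB.c1b Y h) (htheta.idle_theta hiY) (htheta.tr_of_idle hiZ hstep)
  obtain ⟨n1, hpn, rfl⟩ := htheta.exists_of_tauPath hp
  exact ⟨n1, N2, hpn, (htheta.of_tr_to hN1).2, h2⟩

theorem exists_idle_of_theta (h : Rp (theta Y M) (theta Y N)) (hi : Idle Tr M Y) :
    ∃ N', TauPath Tr N N' ∧ Idle Tr N' Y ∧ Rp (theta Y M) (theta Y N') := by
  obtain ⟨N', hp, hiN', h'⟩ := hB.exists_idle (htheta.idle_theta hi) h
  obtain ⟨n', hpn, rfl⟩ := htheta.exists_of_tauPath hp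
  exact ⟨n', hpn, htheta.idle_of_idle_theta_self hiN', h'⟩

theorem progresses_thetaPreimage :
    Progresses Tr ⊥ (thetaPreimage theta Rp)
      (Rp ⊔ (⊥ ⊔ idlePairs Tr theta Rp))
      (Rt ⊔ (thetaPreimage theta Rp ⊔ fun M _ N => idlePairs Tr theta Rp M N)) where
  symm_p h := h
  symm_t := hB.symm_p
  c1a h := False.elim h
  c1b _ h := False.elim h
  c2a h hstep :=
    let ⟨N1, N2, hp, ho, h1, h2⟩ := htheta.exists_match_tau_of_theta hB h hstep
    ⟨N1, N2, hp, ho, Or.inr (Or.inl h1), Or.inr (Or.inl h2)⟩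
  c2b h ha hstep :=
    let ⟨N1, N2, hp, hN1, h1, h2⟩ :=
      htheta.exists_match_vis_of_theta hB h (htheta.tr_vis ha hstep)
    ⟨N1, N2, hp, hN1, Or.inr (Or.inl h1), Or.inl h2⟩
  c2c {_ Y _} h hi :=
    let ⟨N', hp, hiN', h'⟩ := htheta.exists_idle_of_theta hB h hi
    ⟨N', hp, Or.inr (Or.inr ⟨Y, hi, hiN', h'⟩)⟩
  c2d h hi hstep :=
    let ⟨N1, N2, hp, hN1, h2⟩ := htheta.exists_match_to_of_theta hB h hi hi hstep
    ⟨N1, N2, hp, hN1, Or.inl h2⟩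
  c2e h hs :=
    let ⟨_, hp, hN0⟩ := hB.c2e (hB.c1b ∅ h) (htheta.stable_iff.2 hs)
    let ⟨n0, hpn, hN0n⟩ := htheta.exists_of_tauPath hp
    ⟨n0, hpn, htheta.stable_iff.1 (hN0n ▸ hN0)⟩

theorem progresses_idlePairs :
    Progresses Tr (idlePairs Tr theta Rp) (fun M _ N => idlePairs Tr theta Rp M N)
      (Rp ⊔ (⊥ ⊔ idlePairs Tr theta Rp))
      (Rt ⊔ (thetaPreimage theta Rp ⊔ fun M _ N => idlePairs Tr theta Rp M N)) where
  symm_p := fun ⟨Z, hiM, hiN, h⟩ => ⟨Z, hiN, hiM, hB.symm_p h⟩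
  symm_t := fun ⟨Z, hiM, hiN, h⟩ => ⟨Z, hiN, hiM, hB.symm_p h⟩
  c1a := by
    rintro M N α M' ⟨Z, hiM, hiN, h⟩ hα hstep
    match α with
    | Act.tau => exact absurd ⟨M', hstep⟩ hiM.1
    | Act.vis a =>
      obtain ⟨N2, hN, h2⟩ := htheta.exists_match_vis_of_idle hB h hiM hiN hstep
      exact ⟨N, N2, .refl, Or.inr hN, Or.inr (Or.inr ⟨Z, hiM, hiN, h⟩), Or.inl h2⟩
    | Act.to => exact absurd rfl hα
  c1b _ h := Or.inr (Or.inr h)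
  c2a := fun ⟨_, hiM, _, _⟩ hstep => absurd ⟨_, hstep⟩ hiM.1
  c2b := by
    rintro M _ N a M' ⟨Z, hiM, hiN, h⟩ - hstep
    obtain ⟨N2, hN, h2⟩ := htheta.exists_match_vis_of_idle hB h hiM hiN hstep
    exact ⟨N, N2, .refl, hN, Or.inr (Or.inr ⟨Z, hiM, hiN, h⟩), Or.inl h2⟩
  c2c {_ _ N} hMN _ := ⟨N, .refl, Or.inr (Or.inr hMN)⟩
  c2d := fun ⟨_, hiM, _, h⟩ hi hstep =>
    let ⟨N1, N2, hp, hN1, h2⟩ := htheta.exists_match_to_of_theta hB h hi hiM hstep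
    ⟨N1, N2, hp, hN1, Or.inl h2⟩
  c2e {_ _ N} := fun ⟨_, _, hiN, _⟩ _ => ⟨N, .refl, hiN.1⟩

end ThetaSem

/-- `P ~_X Q` iff `θ_X(P) ~ θ_X(Q)`. -/
theorem stmt8 {C A : Type} (Tr : C → Act A → C → Prop) (theta : Set A → C → C)
    (htheta : ThetaSem Tr theta) :
    ∀ (P Q : C) (X : Set A), BisX Tr P X Q ↔ Bis Tr (theta X P) (theta X Q) := by
  intro P Q X
  constructor
  · rintro ⟨Rp, Rt, hB, hPQ⟩
    exact ⟨_, _, hB.sup (htheta.progresses_thetaImage hB), Or.inr ⟨P, Q, X, rfl, rfl, hPQ⟩⟩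
  · rintro ⟨Rp, Rt, hB, hPQ⟩
    exact ⟨_, _, hB.sup ((htheta.progresses_thetaPreimage hB).sup
      (htheta.progresses_idlePairs hB)), Or.inr (Or.inl hPQ)⟩
end

section
/- If P and Q are tau-stable (i.e. no tau-transition from P leads to a state concrete branching reactive bisimilar to P, and likewise for Q) and P is concrete branching reactive bisimilar to Q, then P is rooted concrete branching reactive bisimilar to Q. -/
/-- A rooted concrete branching reactive bisimulation. -/
structure RCBRB {S A : Type} (Tr : S → Act A → S → Prop)
    (Rp : S → S → Prop) (Rt : S → Set A → S → Prop) : Prop where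
  symm_p : ∀ {P Q}, Rp P Q → Rp Q P
  symm_t : ∀ {P X Q}, Rt P X Q → Rt Q X P
  r1a : ∀ {P Q α P'}, Rp P Q → α ≠ Act.to → Tr P α P' →
    ∃ Q', Tr Q α Q' ∧ Bis Tr P' Q'
  r1b : ∀ {P Q} (Y : Set A), Rp P Q → Rt P Y Q
  r2a : ∀ {P X Q P'}, Rt P X Q → Tr P Act.tau P' →
    ∃ Q', Tr Q Act.tau Q' ∧ BisX Tr P' X Q'
  r2b : ∀ {P X Q a P'}, Rt P X Q → a ∈ X → Tr P (Act.vis a) P' →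
    ∃ Q', Tr Q (Act.vis a) Q' ∧ Bis Tr P' Q'
  r2c : ∀ {P X Q}, Rt P X Q → Idle Tr P X → Rp P Q
  r2d : ∀ {P X Q P'}, Rt P X Q → Idle Tr P X → Tr P Act.to P' →
    ∃ Q', Tr Q Act.to Q' ∧ BisX Tr P' X Q'

/-- Rooted concrete branching reactive bisimilarity. -/
def RBis {S A : Type} (Tr : S → Act A → S → Prop) (P Q : S) : Prop :=
  ∃ Rp Rt, RCBRB Tr Rp Rt ∧ Rp P Q

/-!
Since `P ~ Q`, every move `P -α-> P'` is answered by `Q ⇒ Q₁ -(α)-> Q₂` with `P ~ Q₁` and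
`P' ~ Q₂`. Transitivity gives `Q ~ Q₁`, and by stuttering every state on the tau-path from `Q`
to `Q₁` is bisimilar to `Q`; tau-stability of `Q` therefore forces `Q₁ = Q`. Likewise
tau-stability of `P` rules out the empty answer to a tau-move, so moves are answered strongly.
For time-outs, an idle `P` is stable, hence so is `Q`, and the weak answer is again strong.
Thus `~` restricted to pairs of tau-stable states is a rooted bisimulation.
-/

def TauStable {C A : Type} (Tr : C → Act A → C → Prop) (P : C) : Prop :=
  ∀ P', Tr P Act.tau P' → ¬ Bis Tr P P'

theorem Act.tau_ne_to {A : Type} : (Act.tau : Act A) ≠ Act.to := nofun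

theorem Act.vis_ne_to {A : Type} (a : A) : Act.vis a ≠ Act.to := nofun

section

variable {C A : Type} {Tr : C → Act A → C → Prop}

theorem TauPath.eq_of_stable {p q : C} (hs : Stable Tr p) (h : TauPath Tr p q) : q = p := by
  rcases h.cases_head with h | ⟨r, hr, -⟩
  · exact h.symm
  · exact absurd ⟨r, hr⟩ hs

theorem OptStep.tauPath {p q : C} (h : OptStep Tr Act.tau p q) : TauPath Tr p q := by
  rcases h with ⟨-, rfl⟩ | h
  · exact .refl
  · exact .single h

theorem TauPath.exists_of_tau_simulation {R : C → C → Prop}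
    (hR : ∀ {y y' z}, R y z → Tr y Act.tau y' → ∃ z', TauPath Tr z z' ∧ R y' z')
    {y y₁ z : C} (h : TauPath Tr y y₁) (hz : R y z) : ∃ z₁, TauPath Tr z z₁ ∧ R y₁ z₁ := by
  induction h using Relation.ReflTransGen.head_induction_on generalizing z with
  | refl => exact ⟨z, .refl, hz⟩
  | head st _ ih =>
    obtain ⟨z', hzz', hz'⟩ := hR hz st
    obtain ⟨z₁, hz'z₁, hz₁⟩ := ih hz'
    exact ⟨z₁, hzz'.trans hz'z₁, hz₁⟩

namespace CBRB

variable {Rp : C → C → Prop} {Rt : C → Set A → C → Prop}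

theorem exists_tauPath_rp (hR : CBRB Tr Rp Rt) {y y₁ z : C} (h : TauPath Tr y y₁)
    (hz : Rp y z) : ∃ z₁, TauPath Tr z z₁ ∧ Rp y₁ z₁ :=
  h.exists_of_tau_simulation (R := Rp) (fun hz st =>
    let ⟨_, z₂, p₁, p₂, _, h₂⟩ := hR.c1a hz Act.tau_ne_to st
    ⟨z₂, p₁.trans p₂.tauPath, h₂⟩) hz

theorem exists_tauPath_rt (hR : CBRB Tr Rp Rt) {y y₁ z : C} {X : Set A}
    (h : TauPath Tr y y₁) (hz : Rt y X z) : ∃ z₁, TauPath Tr z z₁ ∧ Rt y₁ X z₁ :=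
  h.exists_of_tau_simulation (R := (Rt · X ·)) (fun hz st =>
    let ⟨_, z₂, p₁, p₂, _, h₂⟩ := hR.c2a hz st
    ⟨z₂, p₁.trans p₂.tauPath, h₂⟩) hz

theorem rt_of_stable_of_tauPath (hR : CBRB Tr Rp Rt) {x y y₀ : C} {X : Set A}
    (hs : Stable Tr x) (h : Rt x X y) (hp : TauPath Tr y y₀) : Rt x X y₀ := by
  induction hp using Relation.ReflTransGen.head_induction_on with
  | refl => exact h
  | head st _ ih =>
    apply ih
    obtain ⟨x₁, x₂, p₁, p₂, -, h₂⟩ := hR.c2a (hR.symm_t h) st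
    obtain rfl := p₁.eq_of_stable hs
    rcases p₂ with ⟨-, rfl⟩ | hstep
    · exact hR.symm_t h₂
    · exact absurd ⟨x₂, hstep⟩ hs

theorem rp_of_idle_of_stable (hR : CBRB Tr Rp Rt) {x y : C} {X : Set A} (h : Rt x X y)
    (hI : Idle Tr x X) (hs : Stable Tr y) : Rp x y := by
  obtain ⟨y₀, p, h₀⟩ := hR.c2c h hI
  obtain rfl := p.eq_of_stable hs
  exact h₀

theorem exists_to_of_idle_of_stable (hR : CBRB Tr Rp Rt) {x y x' : C} {X : Set A}
    (h : Rt x X y) (hI : Idle Tr x X) (hs : Stable Tr y) (ht : Tr x Act.to x') :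
    ∃ y', Tr y Act.to y' ∧ Rt x' X y' := by
  obtain ⟨y₁, y₂, p, hstep, h₂⟩ := hR.c2d h hI ht
  obtain rfl := p.eq_of_stable hs
  exact ⟨y₂, hstep, h₂⟩

theorem exists_idle_of_idle (hR : CBRB Tr Rp Rt) {x y : C} {X : Set A} (hI : Idle Tr x X)
    (h : Rt x X y) : ∃ y', TauPath Tr y y' ∧ Rt x X y' ∧ Idle Tr y' X ∧ Rp x y' := by
  obtain ⟨y₀, p, hs⟩ := hR.c2e h hI.1
  have h₀ : Rt x X y₀ := hR.rt_of_stable_of_tauPath hI.1 h p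
  have hI₀ : Idle Tr y₀ X := by
    refine ⟨hs, fun a ha ⟨w, hw⟩ => ?_⟩
    obtain ⟨x₁, x₂, p₁, hstep, -, -⟩ := hR.c2b (hR.symm_t h₀) ha hw
    obtain rfl := p₁.eq_of_stable hI.1
    exact hI.2 a ha ⟨x₂, hstep⟩
  exact ⟨y₀, p, h₀, hI₀, hR.rp_of_idle_of_stable h₀ hI hs⟩

theorem eq : CBRB Tr (· = ·) (fun p _ q => p = q) where
  symm_p h := h.symm
  symm_t h := h.symm
  c1a := by rintro P _ α P' rfl - ht; exact ⟨P, P', .refl, .inr ht, rfl, rfl⟩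
  c1b _ h := h
  c2a := by rintro P X _ P' rfl ht; exact ⟨P, P', .refl, .inr ht, rfl, rfl⟩
  c2b := by rintro P X _ a P' rfl - ht; exact ⟨P, P', .refl, ht, rfl, rfl⟩
  c2c := by rintro P X _ rfl -; exact ⟨P, .refl, rfl⟩
  c2d := by rintro P X _ P' rfl - ht; exact ⟨P, P', .refl, ht, rfl⟩
  c2e := by rintro P X _ rfl hs; exact ⟨P, .refl, hs⟩

theorem bis : CBRB Tr (Bis Tr) (BisX Tr) where
  symm_p := fun ⟨_, _, hR, h⟩ => ⟨_, _, hR, hR.symm_p h⟩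
  symm_t := fun ⟨_, _, hR, h⟩ => ⟨_, _, hR, hR.symm_t h⟩
  c1a := fun ⟨_, _, hR, h⟩ hα ht =>
    let ⟨Q₁, Q₂, p₁, p₂, h₁, h₂⟩ := hR.c1a h hα ht
    ⟨Q₁, Q₂, p₁, p₂, ⟨_, _, hR, h₁⟩, ⟨_, _, hR, h₂⟩⟩
  c1b := fun Y ⟨_, _, hR, h⟩ => ⟨_, _, hR, hR.c1b Y h⟩
  c2a := fun ⟨_, _, hR, h⟩ ht =>
    let ⟨Q₁, Q₂, p₁, p₂, h₁, h₂⟩ := hR.c2a h ht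
    ⟨Q₁, Q₂, p₁, p₂, ⟨_, _, hR, h₁⟩, ⟨_, _, hR, h₂⟩⟩
  c2b := fun ⟨_, _, hR, h⟩ ha ht =>
    let ⟨Q₁, Q₂, p₁, p₂, h₁, h₂⟩ := hR.c2b h ha ht
    ⟨Q₁, Q₂, p₁, p₂, ⟨_, _, hR, h₁⟩, ⟨_, _, hR, h₂⟩⟩
  c2c := fun ⟨_, _, hR, h⟩ hI =>
    let ⟨Q₀, p, h₀⟩ := hR.c2c h hI
    ⟨Q₀, p, ⟨_, _, hR, h₀⟩⟩
  c2d := fun ⟨_, _, hR, h⟩ hI ht =>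
    let ⟨Q₁, Q₂, p₁, p₂, h₂⟩ := hR.c2d h hI ht
    ⟨Q₁, Q₂, p₁, p₂, ⟨_, _, hR, h₂⟩⟩
  c2e := fun ⟨_, _, hR, h⟩ hs => hR.c2e h hs

end CBRB

theorem Bis.refl (x : C) : Bis Tr x x := ⟨_, _, CBRB.eq, rfl⟩

theorem BisX.refl (x : C) (X : Set A) : BisX Tr x X x := ⟨_, _, CBRB.eq, rfl⟩

theorem Bis.symm {x y : C} (h : Bis Tr x y) : Bis Tr y x := CBRB.bis.symm_p h

theorem BisX.symm {x y : C} {X : Set A} (h : BisX Tr x X y) : BisX Tr y X x :=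
  CBRB.bis.symm_t h

theorem Bis.bisX {x y : C} (X : Set A) (h : Bis Tr x y) : BisX Tr x X y := CBRB.bis.c1b X h

theorem CBRB.bis_comp :
    CBRB Tr (Relation.Comp (Bis Tr) (Bis Tr))
      (fun x X z => ∃ y, BisX Tr x X y ∧ BisX Tr y X z) where
  symm_p := fun ⟨y, h₁, h₂⟩ => ⟨y, h₂.symm, h₁.symm⟩
  symm_t := fun ⟨y, h₁, h₂⟩ => ⟨y, h₂.symm, h₁.symm⟩
  c1a := by
    rintro x z α x' ⟨y, hxy, hyz⟩ hα ht
    obtain ⟨y₁, y₂, py, opt, h₁, h₂⟩ := bis.c1a hxy hα ht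
    obtain ⟨z₁, pz, hy₁z₁⟩ := bis.exists_tauPath_rp py hyz
    rcases opt with ⟨hτ, rfl⟩ | hstep
    · exact ⟨z₁, z₁, pz, .inl ⟨hτ, rfl⟩, ⟨y₁, h₁, hy₁z₁⟩, ⟨y₁, h₂, hy₁z₁⟩⟩
    · obtain ⟨z₂, z₃, pz', opt', g₁, g₂⟩ := bis.c1a hy₁z₁ hα hstep
      exact ⟨z₂, z₃, pz.trans pz', opt', ⟨y₁, h₁, g₁⟩, ⟨y₂, h₂, g₂⟩⟩
  c1b Y := fun ⟨y, h₁, h₂⟩ => ⟨y, h₁.bisX Y, h₂.bisX Y⟩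
  c2a := by
    rintro x X z x' ⟨y, hxy, hyz⟩ ht
    obtain ⟨y₁, y₂, py, opt, h₁, h₂⟩ := bis.c2a hxy ht
    obtain ⟨z₁, pz, hy₁z₁⟩ := bis.exists_tauPath_rt py hyz
    rcases opt with ⟨hτ, rfl⟩ | hstep
    · exact ⟨z₁, z₁, pz, .inl ⟨hτ, rfl⟩, ⟨y₁, h₁, hy₁z₁⟩, ⟨y₁, h₂, hy₁z₁⟩⟩
    · obtain ⟨z₂, z₃, pz', opt', g₁, g₂⟩ := bis.c2a hy₁z₁ hstep
      exact ⟨z₂, z₃, pz.trans pz', opt', ⟨y₁, h₁, g₁⟩, ⟨y₂, h₂, g₂⟩⟩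
  c2b := by
    rintro x X z a x' ⟨y, hxy, hyz⟩ ha ht
    obtain ⟨y₁, y₂, py, hstep, h₁, h₂⟩ := bis.c2b hxy ha ht
    obtain ⟨z₁, pz, hy₁z₁⟩ := bis.exists_tauPath_rt py hyz
    obtain ⟨z₂, z₃, pz', hstep', g₁, g₂⟩ := bis.c2b hy₁z₁ ha hstep
    exact ⟨z₂, z₃, pz.trans pz', hstep', ⟨y₁, h₁, g₁⟩, ⟨y₂, h₂, g₂⟩⟩
  c2c := by
    rintro x X z ⟨y, hxy, hyz⟩ hI
    obtain ⟨y', py, -, hI', hxy'⟩ := bis.exists_idle_of_idle hI hxy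
    obtain ⟨z', pz, hy'z'⟩ := bis.exists_tauPath_rt py hyz
    obtain ⟨z'', pz', -, -, hy'z''⟩ := bis.exists_idle_of_idle hI' hy'z'
    exact ⟨z'', pz.trans pz', ⟨y', hxy', hy'z''⟩⟩
  c2d := by
    rintro x X z x' ⟨y, hxy, hyz⟩ hI ht
    obtain ⟨y', py, hxy', hI', -⟩ := bis.exists_idle_of_idle hI hxy
    obtain ⟨y'', hty, hx'y''⟩ := bis.exists_to_of_idle_of_stable hxy' hI hI'.1 ht
    obtain ⟨z', pz, hy'z'⟩ := bis.exists_tauPath_rt py hyz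
    obtain ⟨z'', pz', hy'z'', hI'', -⟩ := bis.exists_idle_of_idle hI' hy'z'
    obtain ⟨z₂, htz, hy''z₂⟩ := bis.exists_to_of_idle_of_stable hy'z'' hI' hI''.1 hty
    exact ⟨z'', z₂, pz.trans pz', htz, ⟨y'', hx'y'', hy''z₂⟩⟩
  c2e := by
    rintro x X z ⟨y, hxy, hyz⟩ hs
    obtain ⟨y₀, py, hy₀⟩ := bis.c2e hxy hs
    obtain ⟨z', pz, hy₀z'⟩ := bis.exists_tauPath_rt py hyz
    obtain ⟨z₀, pz', hz₀⟩ := bis.c2e hy₀z' hy₀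
    exact ⟨z₀, pz.trans pz', hz₀⟩

theorem Bis.trans {x y z : C} (h₁ : Bis Tr x y) (h₂ : Bis Tr y z) : Bis Tr x z :=
  ⟨_, _, CBRB.bis_comp, y, h₁, h₂⟩

def OnTauPathToBis (Tr : C → Act A → C → Prop) (x y : C) : Prop :=
  ∃ z, TauPath Tr x y ∧ TauPath Tr y z ∧ Bis Tr x z

theorem CBRB.bis_sup_onTauPathToBis :
    CBRB Tr (fun x y => Bis Tr x y ∨ OnTauPathToBis Tr x y ∨ OnTauPathToBis Tr y x)
      (fun x X y => BisX Tr x X y ∨ OnTauPathToBis Tr x y ∨ OnTauPathToBis Tr y x) where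
  symm_p := by
    rintro x y (h | h | h)
    exacts [.inl h.symm, .inr (.inr h), .inr (.inl h)]
  symm_t := by
    rintro x X y (h | h | h)
    exacts [.inl h.symm, .inr (.inr h), .inr (.inl h)]
  c1a := by
    rintro x y α x' (h | ⟨z, -, pyz, hxz⟩ | ⟨z, pyx, -, -⟩) hα ht
    · obtain ⟨y₁, y₂, p₁, p₂, h₁, h₂⟩ := bis.c1a h hα ht
      exact ⟨y₁, y₂, p₁, p₂, .inl h₁, .inl h₂⟩
    · obtain ⟨z₁, z₂, p₁, p₂, h₁, h₂⟩ := bis.c1a hxz hα ht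
      exact ⟨z₁, z₂, pyz.trans p₁, p₂, .inl h₁, .inl h₂⟩
    · exact ⟨x, x', pyx, .inr ht, .inl (.refl x), .inl (.refl x')⟩
  c1b Y := by
    rintro (h | h | h)
    exacts [.inl (h.bisX Y), .inr (.inl h), .inr (.inr h)]
  c2a := by
    rintro x X y x' (h | ⟨z, -, pyz, hxz⟩ | ⟨z, pyx, -, -⟩) ht
    · obtain ⟨y₁, y₂, p₁, p₂, h₁, h₂⟩ := bis.c2a h ht
      exact ⟨y₁, y₂, p₁, p₂, .inl h₁, .inl h₂⟩
    · obtain ⟨z₁, z₂, p₁, p₂, h₁, h₂⟩ := bis.c2a (hxz.bisX X) ht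
      exact ⟨z₁, z₂, pyz.trans p₁, p₂, .inl h₁, .inl h₂⟩
    · exact ⟨x, x', pyx, .inr ht, .inl (.refl x X), .inl (.refl x' X)⟩
  c2b := by
    rintro x X y a x' (h | ⟨z, -, pyz, hxz⟩ | ⟨z, pyx, -, -⟩) ha ht
    · obtain ⟨y₁, y₂, p₁, p₂, h₁, h₂⟩ := bis.c2b h ha ht
      exact ⟨y₁, y₂, p₁, p₂, .inl h₁, .inl h₂⟩
    · obtain ⟨z₁, z₂, p₁, p₂, h₁, h₂⟩ := bis.c2b (hxz.bisX X) ha ht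
      exact ⟨z₁, z₂, pyz.trans p₁, p₂, .inl h₁, .inl h₂⟩
    · exact ⟨x, x', pyx, ht, .inl (.refl x X), .inl (.refl x')⟩
  c2c := by
    rintro x X y (h | ⟨z, pxy, -, -⟩ | ⟨z, pyx, -, -⟩) hI
    · obtain ⟨y₀, p, h₀⟩ := bis.c2c h hI
      exact ⟨y₀, p, .inl h₀⟩
    · obtain rfl := pxy.eq_of_stable hI.1
      exact ⟨y, .refl, .inl (.refl y)⟩
    · exact ⟨x, pyx, .inl (.refl x)⟩
  c2d := by
    rintro x X y x' (h | ⟨z, pxy, -, -⟩ | ⟨z, pyx, -, -⟩) hI ht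
    · obtain ⟨y₁, y₂, p₁, p₂, h₂⟩ := bis.c2d h hI ht
      exact ⟨y₁, y₂, p₁, p₂, .inl h₂⟩
    · obtain rfl := pxy.eq_of_stable hI.1
      exact ⟨y, x', .refl, ht, .inl (.refl x' X)⟩
    · exact ⟨x, x', pyx, ht, .inl (.refl x' X)⟩
  c2e := by
    rintro x X y (h | ⟨z, pxy, -, -⟩ | ⟨z, pyx, -, -⟩) hs
    · exact bis.c2e h hs
    · obtain rfl := pxy.eq_of_stable hs
      exact ⟨y, .refl, hs⟩
    · exact ⟨x, pyx, hs⟩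

theorem Bis.of_tauPath {x y z : C} (h : Bis Tr x z) (pxy : TauPath Tr x y)
    (pyz : TauPath Tr y z) : Bis Tr x y :=
  ⟨_, _, CBRB.bis_sup_onTauPathToBis, .inr (.inl ⟨z, pxy, pyz, h⟩)⟩

theorem TauStable.eq_of_tauPath {q q₁ : C} (hq : TauStable Tr q) (p : TauPath Tr q q₁)
    (h : Bis Tr q q₁) : q₁ = q := by
  rcases p.cases_head with rfl | ⟨r, hr, p'⟩
  · rfl
  · exact absurd (h.of_tauPath (.single hr) p') (hq r hr)

theorem Stable.of_bis {p q : C} (hp : Stable Tr p) (h : Bis Tr p q) (hq : TauStable Tr q) :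
    Stable Tr q := by
  rintro ⟨r, hr⟩
  obtain ⟨p₁, p₂, p, opt, -, h₂⟩ := CBRB.bis.c1a h.symm Act.tau_ne_to hr
  obtain rfl := p.eq_of_stable hp
  rcases opt with ⟨-, rfl⟩ | hstep
  · exact hq r hr (h.symm.trans h₂.symm)
  · exact hp ⟨p₂, hstep⟩

theorem Bis.exists_step_of_tauStable {p q p' : C} {α : Act A} (hp : TauStable Tr p)
    (hq : TauStable Tr q) (h : Bis Tr p q) (hα : α ≠ Act.to) (ht : Tr p α p') :
    ∃ q', Tr q α q' ∧ Bis Tr p' q' := by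
  obtain ⟨q₁, q₂, pq, opt, h₁, h₂⟩ := CBRB.bis.c1a h hα ht
  obtain rfl := hq.eq_of_tauPath pq (h.symm.trans h₁)
  rcases opt with ⟨rfl, rfl⟩ | hstep
  · exact absurd (h.trans h₂.symm) (hp p' ht)
  · exact ⟨q₂, hstep, h₂⟩

theorem Bis.exists_to_step_of_idle {p q p' : C} {X : Set A} (hq : TauStable Tr q)
    (h : Bis Tr p q) (hI : Idle Tr p X) (ht : Tr p Act.to p') :
    ∃ q', Tr q Act.to q' ∧ BisX Tr p' X q' :=
  CBRB.bis.exists_to_of_idle_of_stable (h.bisX X) hI (hI.1.of_bis h hq) ht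

theorem RCBRB.bis_of_tauStable :
    RCBRB Tr (fun p q => TauStable Tr p ∧ TauStable Tr q ∧ Bis Tr p q)
      (fun p _ q => TauStable Tr p ∧ TauStable Tr q ∧ Bis Tr p q) where
  symm_p := fun ⟨hp, hq, h⟩ => ⟨hq, hp, h.symm⟩
  symm_t := fun ⟨hp, hq, h⟩ => ⟨hq, hp, h.symm⟩
  r1a := fun ⟨hp, hq, h⟩ hα ht => h.exists_step_of_tauStable hp hq hα ht
  r1b _ h := h
  r2a := fun ⟨hp, hq, h⟩ ht =>
    let ⟨q', ht', h'⟩ := h.exists_step_of_tauStable hp hq Act.tau_ne_to ht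
    ⟨q', ht', h'.bisX _⟩
  r2b := fun ⟨hp, hq, h⟩ _ ht => h.exists_step_of_tauStable hp hq (Act.vis_ne_to _) ht
  r2c h _ := h
  r2d := fun ⟨_, hq, h⟩ hI ht => h.exists_to_step_of_idle hq hI ht

end

/-- If `P` and `Q` are tau-stable and `P ~ Q`, then `P ~r Q`. -/
theorem stmt10 {C A : Type} (Tr : C → Act A → C → Prop) (P Q : C)
    (hP : ∀ P', Tr P Act.tau P' → ¬ Bis Tr P P')
    (hQ : ∀ Q', Tr Q Act.tau Q' → ¬ Bis Tr Q Q')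
    (h : Bis Tr P Q) :
    RBis Tr P Q :=
  ⟨_, _, RCBRB.bis_of_tauStable, hP, hQ, h⟩
end

section
/- Soundness of the reactive approximation axiom: if ψ_X(P) is rooted concrete branching reactive bisimilar to ψ_X(Q) for every X ⊆ A, then P is rooted concrete branching reactive bisimilar to Q. -/
/-- Semantics of the operator `ψ_X`: `ψ_X(P) -α-> P'` iff `P -α-> P'` and `α ≠ t`;
`ψ_X(P) -t-> θ_X(P')` iff `P -t-> P'` and `I(P) ∩ (X ∪ {tau}) = ∅`. -/
def PsiSem {C A : Type} (Tr : C → Act A → C → Prop)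
    (theta psi : Set A → C → C) : Prop :=
  ∀ (X : Set A) (P : C) (α : Act A) (Q' : C),
    Tr (psi X P) α Q' ↔
      ((α ≠ Act.to ∧ Tr P α Q') ∨
       (α = Act.to ∧ Idle Tr P X ∧ ∃ P', Tr P Act.to P' ∧ Q' = theta X P'))

/-- A rooted concrete branching time-out bisimulation. -/
def RCBTB {C A : Type} (Tr : C → Act A → C → Prop) (theta : Set A → C → C)
    (B : C → C → Prop) : Prop :=
  (∀ {p q}, B p q → B q p) ∧
  (∀ {p q α p'}, B p q → α ≠ Act.to → Tr p α p' →
     ∃ q', Tr q α q' ∧ Bis Tr p' q') ∧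
  (∀ {p q} (X : Set A), ∀ {p'}, B p q → Idle Tr p X → Tr p Act.to p' →
     ∃ q', Tr q Act.to q' ∧ Bis Tr (theta X p') (theta X q'))

/-- Rooted concrete branching reactive bisimilarity, characterised via rooted concrete
branching time-out bisimulations. -/
def RTBis {C A : Type} (Tr : C → Act A → C → Prop) (theta : Set A → C → C)
    (p q : C) : Prop :=
  ∃ B, RCBTB Tr theta B ∧ B p q

/-!
The relation `P B Q :↔ ∀ X, ψ_X P ~r ψ_X Q` is itself a rooted time-out bisimulation. Every
move of `P` other than a time-out is a move of `ψ_X P`; a time-out `P -t-> P'` of an `X`-idle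
`P` is the move `ψ_X P -t-> θ_X P'`, so matching it in `ψ_X Q` gives a time-out `Q -t-> Q'`
with `θ_X θ_X P'` and `θ_X θ_X Q'` branching bisimilar. Strong bisimilarity is compatible with
branching reactive bisimilarity, and `θ_X θ_X R` is strongly bisimilar to `θ_X R`, hence
`θ_X P'` and `θ_X Q'` are branching bisimilar.
-/

section StrongBisim

variable {C A : Type} {Tr : C → Act A → C → Prop}

def IsStrongBisimulation (Tr : C → Act A → C → Prop) (S : C → C → Prop) : Prop :=
  ∀ ⦃r s⦄, S r s →
    (∀ α r', Tr r α r' → ∃ s', Tr s α s' ∧ S r' s') ∧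
    (∀ α s', Tr s α s' → ∃ r', Tr r α r' ∧ S r' s')

def StrongBisim (Tr : C → Act A → C → Prop) (r s : C) : Prop :=
  ∃ S, IsStrongBisimulation Tr S ∧ S r s

namespace StrongBisim

variable {r s r' s' : C} {α : Act A}

lemma forth (h : StrongBisim Tr r s) (hr : Tr r α r') :
    ∃ s', Tr s α s' ∧ StrongBisim Tr r' s' := by
  obtain ⟨S, hS, hrs⟩ := h
  obtain ⟨s', hs, h'⟩ := (hS hrs).1 α r' hr
  exact ⟨s', hs, S, hS, h'⟩

lemma back (h : StrongBisim Tr r s) (hs : Tr s α s') :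
    ∃ r', Tr r α r' ∧ StrongBisim Tr r' s' := by
  obtain ⟨S, hS, hrs⟩ := h
  obtain ⟨r', hr, h'⟩ := (hS hrs).2 α s' hs
  exact ⟨r', hr, S, hS, h'⟩

lemma forth_tauPath (h : StrongBisim Tr r s) (hr : TauPath Tr r r') :
    ∃ s', TauPath Tr s s' ∧ StrongBisim Tr r' s' := by
  induction hr with
  | refl => exact ⟨s, .refl, h⟩
  | tail _ hstep ih =>
    obtain ⟨s₁, hpath, h₁⟩ := ih
    obtain ⟨s₂, hs₂, h₂⟩ := h₁.forth hstep
    exact ⟨s₂, hpath.tail hs₂, h₂⟩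

lemma forth_tauPath_step {r₁ r₂ : C} (h : StrongBisim Tr r s) (hpath : TauPath Tr r r₁)
    (hstep : Tr r₁ α r₂) :
    ∃ s₁ s₂, TauPath Tr s s₁ ∧ Tr s₁ α s₂ ∧ StrongBisim Tr r₁ s₁ ∧ StrongBisim Tr r₂ s₂ := by
  obtain ⟨s₁, hs₁, h₁⟩ := h.forth_tauPath hpath
  obtain ⟨s₂, hs₂, h₂⟩ := h₁.forth hstep
  exact ⟨s₁, s₂, hs₁, hs₂, h₁, h₂⟩

lemma forth_tauPath_optStep {r₁ r₂ : C} (h : StrongBisim Tr r s) (hpath : TauPath Tr r r₁)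
    (hstep : OptStep Tr α r₁ r₂) :
    ∃ s₁ s₂, TauPath Tr s s₁ ∧ OptStep Tr α s₁ s₂ ∧
      StrongBisim Tr r₁ s₁ ∧ StrongBisim Tr r₂ s₂ := by
  rcases hstep with ⟨hα, rfl⟩ | hstep
  · obtain ⟨s₁, hs₁, h₁⟩ := h.forth_tauPath hpath
    exact ⟨s₁, s₁, hs₁, .inl ⟨hα, rfl⟩, h₁, h₁⟩
  · obtain ⟨s₁, s₂, hs₁, hs₂, h₁, h₂⟩ := h.forth_tauPath_step hpath hstep
    exact ⟨s₁, s₂, hs₁, .inr hs₂, h₁, h₂⟩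

lemma stable_iff (h : StrongBisim Tr r s) : Stable Tr r ↔ Stable Tr s := by
  constructor
  · rintro hr ⟨s', hs⟩
    obtain ⟨r', hr', -⟩ := h.back hs
    exact hr ⟨r', hr'⟩
  · rintro hs ⟨r', hr⟩
    obtain ⟨s', hs', -⟩ := h.forth hr
    exact hs ⟨s', hs'⟩

lemma idle_of_idle {X : Set A} (h : StrongBisim Tr r s) (hs : Idle Tr s X) : Idle Tr r X := by
  refine ⟨h.stable_iff.mpr hs.1, ?_⟩
  rintro a ha ⟨r', hr⟩
  obtain ⟨s', hs', -⟩ := h.forth hr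
  exact hs.2 a ha ⟨s', hs'⟩

end StrongBisim

/-- Witnessed by `Rp`, `Rt` composed with strong bisimilarity on both sides: a challenge is
pulled back to the old state, answered there, and the answer pushed forward. -/
lemma Bis.of_strongBisim {p q p' q' : C} (h : Bis Tr p q) (hp : StrongBisim Tr p p')
    (hq : StrongBisim Tr q q') : Bis Tr p' q' := by
  obtain ⟨Rp, Rt, hR, hpq⟩ := h
  refine ⟨fun p q => ∃ p₀ q₀, Rp p₀ q₀ ∧ StrongBisim Tr p₀ p ∧ StrongBisim Tr q₀ q,
    fun p X q => ∃ p₀ q₀, Rt p₀ X q₀ ∧ StrongBisim Tr p₀ p ∧ StrongBisim Tr q₀ q,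
    ⟨?symm_p, ?symm_t, ?c1a, ?c1b, ?c2a, ?c2b, ?c2c, ?c2d, ?c2e⟩, p, q, hpq, hp, hq⟩
  case symm_p => exact fun ⟨p₀, q₀, h, hp, hq⟩ => ⟨q₀, p₀, hR.symm_p h, hq, hp⟩
  case symm_t => exact fun ⟨p₀, q₀, h, hp, hq⟩ => ⟨q₀, p₀, hR.symm_t h, hq, hp⟩
  case c1b => exact fun Y ⟨p₀, q₀, h, hp, hq⟩ => ⟨p₀, q₀, hR.c1b Y h, hp, hq⟩
  case c1a =>
    rintro p q α p' ⟨p₀, q₀, h, hp, hq⟩ hα hstep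
    obtain ⟨p₀', hp₀', hp'⟩ := hp.back hstep
    obtain ⟨T₁, T₂, hpath, hopt, h₁, h₂⟩ := hR.c1a h hα hp₀'
    obtain ⟨U₁, U₂, hU₁, hU₂, hT₁, hT₂⟩ := hq.forth_tauPath_optStep hpath hopt
    exact ⟨U₁, U₂, hU₁, hU₂, ⟨p₀, T₁, h₁, hp, hT₁⟩, ⟨p₀', T₂, h₂, hp', hT₂⟩⟩
  case c2a =>
    rintro p X q p' ⟨p₀, q₀, h, hp, hq⟩ hstep
    obtain ⟨p₀', hp₀', hp'⟩ := hp.back hstep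
    obtain ⟨T₁, T₂, hpath, hopt, h₁, h₂⟩ := hR.c2a h hp₀'
    obtain ⟨U₁, U₂, hU₁, hU₂, hT₁, hT₂⟩ := hq.forth_tauPath_optStep hpath hopt
    exact ⟨U₁, U₂, hU₁, hU₂, ⟨p₀, T₁, h₁, hp, hT₁⟩, ⟨p₀', T₂, h₂, hp', hT₂⟩⟩
  case c2b =>
    rintro p X q a p' ⟨p₀, q₀, h, hp, hq⟩ ha hstep
    obtain ⟨p₀', hp₀', hp'⟩ := hp.back hstep
    obtain ⟨T₁, T₂, hpath, hT, h₁, h₂⟩ := hR.c2b h ha hp₀'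
    obtain ⟨U₁, U₂, hU₁, hU₂, hT₁, hT₂⟩ := hq.forth_tauPath_step hpath hT
    exact ⟨U₁, U₂, hU₁, hU₂, ⟨p₀, T₁, h₁, hp, hT₁⟩, ⟨p₀', T₂, h₂, hp', hT₂⟩⟩
  case c2c =>
    rintro p X q ⟨p₀, q₀, h, hp, hq⟩ hidle
    obtain ⟨T₀, hpath, h₀⟩ := hR.c2c h (hp.idle_of_idle hidle)
    obtain ⟨U₀, hU₀, hT₀⟩ := hq.forth_tauPath hpath
    exact ⟨U₀, hU₀, p₀, T₀, h₀, hp, hT₀⟩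
  case c2d =>
    rintro p X q p' ⟨p₀, q₀, h, hp, hq⟩ hidle hstep
    obtain ⟨p₀', hp₀', hp'⟩ := hp.back hstep
    obtain ⟨T₁, T₂, hpath, hT, h₂⟩ := hR.c2d h (hp.idle_of_idle hidle) hp₀'
    obtain ⟨U₁, U₂, hU₁, hU₂, -, hT₂⟩ := hq.forth_tauPath_step hpath hT
    exact ⟨U₁, U₂, hU₁, hU₂, p₀', T₂, h₂, hp', hT₂⟩
  case c2e =>
    rintro p X q ⟨p₀, q₀, h, hp, hq⟩ hstable
    obtain ⟨T₀, hpath, hT₀⟩ := hR.c2e h (hp.stable_iff.mpr hstable)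
    obtain ⟨U₀, hU₀, hTU⟩ := hq.forth_tauPath hpath
    exact ⟨U₀, hU₀, hTU.stable_iff.mp hT₀⟩

section Operators

variable {C A : Type} {Tr : C → Act A → C → Prop} {theta psi : Set A → C → C}

lemma theta_tau_iff (htheta : ThetaSem Tr theta) {X : Set A} {p r : C} :
    Tr (theta X p) Act.tau r ↔ ∃ p', Tr p Act.tau p' ∧ r = theta X p' := by
  rw [htheta]
  constructor
  · rintro (⟨-, hp⟩ | ⟨a, ha, -⟩ | ⟨hidle, hr⟩)
    · exact hp
    · cases ha
    · exact absurd ⟨r, hr⟩ hidle.1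
  · exact fun hp => .inl ⟨rfl, hp⟩

lemma theta_idle (htheta : ThetaSem Tr theta) {X : Set A} {p : C} (h : Idle Tr p X) :
    Idle Tr (theta X p) X := by
  refine ⟨?_, ?_⟩
  · rintro ⟨r, hr⟩
    obtain ⟨p', hp', -⟩ := (theta_tau_iff htheta).mp hr
    exact h.1 ⟨p', hp'⟩
  · rintro a ha ⟨r, hr⟩
    rcases (htheta X p (Act.vis a) r).mp hr with ⟨ha', -⟩ | ⟨-, -, -, hr⟩ | ⟨-, hr⟩
    · cases ha'
    all_goals exact h.2 a ha ⟨r, hr⟩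

/-- The witnessing relation is the identity together with the pairs `(θ_X θ_X p, θ_X p)`:
`θ_X θ_X p` idles exactly when `θ_X p` does, and otherwise both make the same moves. -/
lemma strongBisim_theta_theta (htheta : ThetaSem Tr theta) (X : Set A) (p : C) :
    StrongBisim Tr (theta X (theta X p)) (theta X p) := by
  refine ⟨fun r s => r = s ∨ ∃ p, r = theta X (theta X p) ∧ s = theta X p, ?_, .inr ⟨p, rfl, rfl⟩⟩
  rintro r s (rfl | ⟨p, rfl, rfl⟩)
  · exact ⟨fun α r' h => ⟨r', h, .inl rfl⟩, fun α s' h => ⟨s', h, .inl rfl⟩⟩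
  refine ⟨fun α r' hr => ?_, fun α s' hs => ?_⟩
  · rcases (htheta X (theta X p) α r').mp hr with ⟨rfl, _, hstep, rfl⟩ | ⟨-, -, -, hr⟩ | ⟨-, hr⟩
    · obtain ⟨p', hp', rfl⟩ := (theta_tau_iff htheta).mp hstep
      exact ⟨theta X p', (theta_tau_iff htheta).mpr ⟨p', hp', rfl⟩, .inr ⟨p', rfl, rfl⟩⟩
    all_goals exact ⟨r', hr, .inl rfl⟩
  · rcases (htheta X p α s').mp hs with ⟨rfl, p', hp', rfl⟩ | ⟨a, rfl, ha, -⟩ | ⟨hidle, -⟩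
    · refine ⟨theta X (theta X p'), ?_, .inr ⟨p', rfl, rfl⟩⟩
      exact (theta_tau_iff htheta).mpr ⟨theta X p', (theta_tau_iff htheta).mpr ⟨p', hp', rfl⟩, rfl⟩
    · exact ⟨s', (htheta X _ _ _).mpr (.inr (.inl ⟨a, rfl, ha, hs⟩)), .inl rfl⟩
    · exact ⟨s', (htheta X _ _ _).mpr (.inr (.inr ⟨theta_idle htheta hidle, hs⟩)), .inl rfl⟩

lemma psi_step_iff (hpsi : PsiSem Tr theta psi) {X : Set A} {p p' : C} {α : Act A}
    (hα : α ≠ Act.to) : Tr (psi X p) α p' ↔ Tr p α p' := by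
  rw [hpsi]
  exact ⟨fun h => h.elim And.right fun h => absurd h.1 hα, fun h => .inl ⟨hα, h⟩⟩

lemma psi_to_iff (hpsi : PsiSem Tr theta psi) {X : Set A} {p r : C} :
    Tr (psi X p) Act.to r ↔ Idle Tr p X ∧ ∃ p', Tr p Act.to p' ∧ r = theta X p' := by
  rw [hpsi]
  exact ⟨fun h => h.elim (fun h => absurd rfl h.1) And.right, fun h => .inr ⟨rfl, h⟩⟩

lemma psi_idle_iff (hpsi : PsiSem Tr theta psi) {X Y : Set A} {p : C} :
    Idle Tr (psi X p) Y ↔ Idle Tr p Y := by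
  simp [Idle, Stable, psi_step_iff hpsi]

end Operators

section Reactive

variable {C A : Type} {Tr : C → Act A → C → Prop} {theta : Set A → C → C}

lemma RTBis.symm {p q : C} (h : RTBis Tr theta p q) : RTBis Tr theta q p :=
  let ⟨B, hB, hpq⟩ := h
  ⟨B, hB, hB.1 hpq⟩

lemma RTBis.exists_step {p q p' : C} {α : Act A} (h : RTBis Tr theta p q) (hα : α ≠ Act.to)
    (hp : Tr p α p') : ∃ q', Tr q α q' ∧ Bis Tr p' q' :=
  let ⟨_, hB, hpq⟩ := h
  hB.2.1 hpq hα hp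

lemma RTBis.exists_to_step {p q p' : C} {X : Set A} (h : RTBis Tr theta p q)
    (hidle : Idle Tr p X) (hp : Tr p Act.to p') :
    ∃ q', Tr q Act.to q' ∧ Bis Tr (theta X p') (theta X q') :=
  let ⟨_, hB, hpq⟩ := h
  hB.2.2 X hpq hidle hp

lemma rcbtb_forall_psi {psi : Set A → C → C} (htheta : ThetaSem Tr theta)
    (hpsi : PsiSem Tr theta psi) :
    RCBTB Tr theta fun p q => ∀ X, RTBis Tr theta (psi X p) (psi X q) := by
  refine ⟨fun h X => (h X).symm, fun {p q α p'} h hα hp => ?_, fun {p q} X {p'} h hidle hp => ?_⟩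
  · obtain ⟨q', hq, hbis⟩ := (h ∅).exists_step hα ((psi_step_iff hpsi hα).mpr hp)
    exact ⟨q', (psi_step_iff hpsi hα).mp hq, hbis⟩
  · obtain ⟨r, hr, hbis⟩ := (h X).exists_to_step ((psi_idle_iff hpsi).mpr hidle)
      ((psi_to_iff hpsi).mpr ⟨hidle, p', hp, rfl⟩)
    obtain ⟨-, q', hq, rfl⟩ := (psi_to_iff hpsi).mp hr
    exact ⟨q', hq, hbis.of_strongBisim (strongBisim_theta_theta htheta X p')
      (strongBisim_theta_theta htheta X q')⟩

end Reactive

/-- Soundness of the reactive approximation axiom: if `ψ_X(P) ~r ψ_X(Q)` for every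
`X ⊆ A`, then `P ~r Q`. -/
theorem stmt13 {C A : Type} (Tr : C → Act A → C → Prop)
    (theta psi : Set A → C → C)
    (htheta : ThetaSem Tr theta) (hpsi : PsiSem Tr theta psi)
    (P Q : C)
    (h : ∀ X : Set A, RTBis Tr theta (psi X P) (psi X Q)) :
    RTBis Tr theta P Q :=
  ⟨_, rcbtb_forall_psi htheta hpsi, h⟩
end StrongBisim
end
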